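/- arXiv:2409.18123 — 4 statements merged into one kernel-verified Lean document; each statement's English description precedes it below -/
import Mathlib

section
/- Let G be a group and let Z(G) be its center. If the quotient group G / Z(G) has property R_∞, then G has property R_∞. -/
/-- Two elements `g h` of a group `G` are `φ`-twisted conjugate if there is `x : G`
with `h = x * g * (φ x)⁻¹`. -/
def TwistedConj {G : Type*} [Group G] (φ : G ≃* G) (g h : G) : Prop :=
  ∃ x : G, h = x * g * (φ x)⁻¹

/-- `R(φ) = ∞`: the set of `φ`-twisted conjugacy classes is infinite. -/
def ReidemeisterInfinite {G : Type*} [Group G] (φ : G ≃* G) : Prop :=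
  Infinite (Quot (TwistedConj φ))

/-- A group `G` has property `R_∞` if `R(φ) = ∞` for every automorphism `φ` of `G`. -/
def PropertyRInfinity (G : Type*) [Group G] : Prop :=
  ∀ φ : G ≃* G, ReidemeisterInfinite φ

lemma center_map_eq {G : Type*} [Group G] (φ : G ≃* G) :
    (Subgroup.center G).map (φ : G →* G) = Subgroup.center G := by
  ext x
  simp only [Subgroup.mem_map, Subgroup.mem_center_iff]
  constructor
  · rintro ⟨z, hz, rfl⟩ g
    calc g * (φ : G →* G) z = φ (φ.symm g * z) := by simp
      _ = φ (z * φ.symm g) := by rw [hz (φ.symm g)]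
      _ = (φ : G →* G) z * g := by simp
  · intro hx
    refine ⟨φ.symm x, fun g => ?_, by simp⟩
    have h1 := hx (φ g)
    apply φ.injective
    simpa using h1

/-- If the central quotient `G/Z(G)` has property `R_∞`, then so does `G`. -/
theorem propertyRInfinity_of_centralQuotient {G : Type*} [Group G]
    (h : PropertyRInfinity (G ⧸ Subgroup.center G)) :
    PropertyRInfinity G := by
  intro φ
  let Z := Subgroup.center G
  let ψ : (G ⧸ Z) ≃* (G ⧸ Z) := QuotientGroup.congr Z Z φ (center_map_eq φ)
  have hψ : ∀ x : G, ψ (↑x) = ↑(φ x) := fun x => rfl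
  have hrel : ∀ a b : G, TwistedConj φ a b →
      TwistedConj ψ ((a : G ⧸ Z)) ((b : G ⧸ Z)) := by
    rintro a b ⟨x, rfl⟩
    refine ⟨(x : G ⧸ Z), ?_⟩
    rw [hψ x]
    simp
  let f : Quot (TwistedConj φ) → Quot (TwistedConj ψ) :=
    Quot.map (fun g : G => (g : G ⧸ Z)) hrel
  have hsurj : Function.Surjective f := by
    intro q
    obtain ⟨y, rfl⟩ := Quot.exists_rep q
    obtain ⟨g, rfl⟩ := QuotientGroup.mk_surjective y
    exact ⟨Quot.mk _ g, rfl⟩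
  haveI : Infinite (Quot (TwistedConj ψ)) := h ψ
  exact Infinite.of_surjective f hsurj
end

section
/- Let G be a group with trivial center, φ an automorphism of G, m a positive integer minimal with the property that φ^m is inner, and p ∈ G an element with φ^m = (conjugation by p). Then the kernel of the group homomorphism Φ : G ⋊_φ ℤ → Aut(G), Φ(g, n) = (conjugation by g) ∘ φⁿ, is the cyclic subgroup generated by the element (p⁻¹, m). -/
/-- The map `Φ : G ⋊_φ ℤ → Aut(G)`, `Φ(g, n) = (conjugation by g) ∘ φⁿ`, where the
semidirect product `G ⋊_φ ℤ` is realized with `Multiplicative ℤ` acting on `G` via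
integer powers of `φ`. -/
def twistedPhi {G : Type*} [Group G] (φ : MulAut G) :
    (G ⋊[zpowersHom (MulAut G) φ] Multiplicative ℤ) → MulAut G :=
  fun r => MulAut.conj r.left * φ ^ Multiplicative.toAdd r.right

/-!
`Φ` is the homomorphism `G ⋊_φ ℤ → Aut G` built from `conj : G → Aut G` and `n ↦ φⁿ`. On `G` it
restricts to `conj`, which is injective as the centre is trivial, so its kernel meets `G`
trivially and hence projects injectively to `ℤ`. The kernel lies over exactly the `n` with `φⁿ`
inner, a subgroup of `ℤ` which minimality of `m` forces to be `mℤ`; and `(p⁻¹, m)` is a kernel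
element over `m`.
-/

theorem MulAut.conj_eq_one_iff_mem_center {G : Type*} [Group G] {g : G} :
    MulAut.conj g = 1 ↔ g ∈ Subgroup.center G := by
  simp [DFunLike.ext_iff, Subgroup.mem_center_iff, eq_mul_inv_iff_mul_eq, eq_comm]

theorem MulAut.mem_range_conj_iff {G : Type*} [Group G] {f : MulAut G} :
    f ∈ (MulAut.conj : G →* MulAut G).range ↔ ∃ a : G, ∀ x : G, f x = a * x * a⁻¹ := by
  simp [DFunLike.ext_iff, eq_comm]

theorem Subgroup.dvd_of_zpow_mem {A : Type*} [Group A] (S : Subgroup A) {a : A} {m : ℕ}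
    (hm : 0 < m) (hmS : a ^ m ∈ S) (hmin : ∀ k : ℕ, 0 < k → k < m → a ^ k ∉ S)
    {n : ℤ} (hn : a ^ n ∈ S) : (m : ℤ) ∣ n := by
  have hrem : a ^ (n % m) ∈ S := by
    rw [Int.emod_def, sub_eq_add_neg, zpow_add, ← mul_neg, zpow_mul, zpow_natCast]
    exact S.mul_mem hn (S.zpow_mem hmS _)
  have h0 : 0 ≤ n % m := Int.emod_nonneg n (by omega)
  have hlt : n % m < m := Int.emod_lt_of_pos n (by omega)
  refine Int.dvd_of_emod_eq_zero (by_contra fun hne => hmin (n % m).toNat (by omega) (by omega) ?_)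
  rwa [← zpow_natCast, Int.toNat_of_nonneg h0]

namespace SemidirectProduct

variable {N H : Type*} [Group N] [Group H] {φ : H →* MulAut N}

variable (φ) in
def toMulAut : N ⋊[φ] H →* MulAut N :=
  lift MulAut.conj φ fun h => by ext; simp

@[simp]
theorem toMulAut_apply (r : N ⋊[φ] H) : toMulAut φ r = MulAut.conj r.left * φ r.right := rfl

theorem mem_ker_toMulAut_iff {r : N ⋊[φ] H} :
    r ∈ (toMulAut φ).ker ↔ φ r.right = MulAut.conj r.left⁻¹ := by
  rw [MonoidHom.mem_ker, toMulAut_apply, map_inv, mul_eq_one_iff_inv_eq, eq_comm]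

theorem eq_of_mem_ker_toMulAut (hZ : Subgroup.center N = ⊥) {r s : N ⋊[φ] H}
    (hr : r ∈ (toMulAut φ).ker) (hs : s ∈ (toMulAut φ).ker) (h : r.right = s.right) :
    r = s := by
  have hrs : r⁻¹ * s ∈ (toMulAut φ).ker := mul_mem (inv_mem hr) hs
  have hright : (r⁻¹ * s).right = 1 := by simp [h]
  rw [mem_ker_toMulAut_iff, hright, map_one, eq_comm, MulAut.conj_eq_one_iff_mem_center, hZ,
    Subgroup.mem_bot, inv_eq_one] at hrs
  rw [← inv_mul_eq_one]
  ext
  · exact hrs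
  · exact hright

end SemidirectProduct

theorem twistedPhi_eq_toMulAut {G : Type*} [Group G] (φ : MulAut G) :
    twistedPhi φ = SemidirectProduct.toMulAut (zpowersHom (MulAut G) φ) := rfl

open SemidirectProduct in
/-- Let `G` have trivial center, let `m > 0` be minimal with `φ^m` inner, and let
`p ∈ G` satisfy `φ^m = conj p`. Then the kernel of `Φ : G ⋊_φ ℤ → Aut(G)`,
`Φ(g, n) = (conjugation by g) ∘ φⁿ`, is the cyclic subgroup generated by `(p⁻¹, m)`. -/
theorem twistedPhi_kernel {G : Type*} [Group G]
    (hZ : Subgroup.center G = ⊥) (φ : MulAut G)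
    (m : ℕ) (hm : 0 < m) (p : G)
    (hp : ∀ x : G, (φ ^ m) x = p * x * p⁻¹)
    (hmin : ∀ k : ℕ, 0 < k → k < m → ¬ ∃ a : G, ∀ x : G, (φ ^ k) x = a * x * a⁻¹) :
    {r : G ⋊[zpowersHom (MulAut G) φ] Multiplicative ℤ | twistedPhi φ r = 1} =
      (Subgroup.zpowers
        (⟨p⁻¹, Multiplicative.ofAdd (m : ℤ)⟩ :
          G ⋊[zpowersHom (MulAut G) φ] Multiplicative ℤ) : Set _) := by
  set z : G ⋊[zpowersHom (MulAut G) φ] Multiplicative ℤ := ⟨p⁻¹, Multiplicative.ofAdd (m : ℤ)⟩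
  have hpm : φ ^ m = MulAut.conj p := by ext x; exact hp x
  have hz : z ∈ (toMulAut (zpowersHom (MulAut G) φ)).ker := by
    rw [mem_ker_toMulAut_iff]
    simp [z, hpm]
  ext r
  rw [Set.mem_ofPred_eq, twistedPhi_eq_toMulAut, ← MonoidHom.mem_ker, SetLike.mem_coe,
    Subgroup.mem_zpowers_iff]
  refine ⟨fun hr => ?_, by rintro ⟨q, rfl⟩; exact zpow_mem hz q⟩
  have hinner : φ ^ Multiplicative.toAdd r.right ∈ (MulAut.conj : G →* MulAut G).range :=
    ⟨_, (mem_ker_toMulAut_iff.mp hr).symm⟩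
  obtain ⟨q, hq⟩ := Subgroup.dvd_of_zpow_mem MulAut.conj.range hm ⟨p, hpm.symm⟩
    (fun k hk hkm h => hmin k hk hkm (MulAut.mem_range_conj_iff.mp h)) hinner
  refine ⟨q, eq_of_mem_ker_toMulAut hZ (zpow_mem hz q) hr ?_⟩
  calc (z ^ q).right = Multiplicative.ofAdd (m : ℤ) ^ q := by
        rw [← rightHom_eq_right, map_zpow]; rfl
    _ = r.right := by rw [← ofAdd_zsmul, smul_eq_mul, mul_comm, ← hq, ofAdd_toAdd]
end

section
/- Let G be a group with trivial center, φ an automorphism of G, and H the subgroup of Aut(G) generated by all inner automorphisms of G together with φ. Then two elements g, h ∈ G are φ-twisted conjugate if and only if there exists ψ ∈ H such that ψ ∘ ((conjugation by g) ∘ φ) ∘ ψ⁻¹ = (conjugation by h) ∘ φ. -/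
namespace MulAut

variable {G : Type*} [Group G]

theorem mul_conj (ψ : MulAut G) (y : G) : ψ * conj y = conj (ψ y) * ψ := by
  ext a
  simp [conj_apply]

theorem mul_conj_mul_inv (ψ : MulAut G) (y : G) : ψ * conj y * ψ⁻¹ = conj (ψ y) := by
  rw [mul_conj, mul_inv_cancel_right]

theorem ker_conj : (conj : G →* MulAut G).ker = Subgroup.center G := by
  ext g
  simp only [MonoidHom.mem_ker, Subgroup.mem_center_iff, MulEquiv.ext_iff, conj_apply, one_apply,
    mul_inv_eq_iff_eq_mul]
  exact forall_congr' fun _ => eq_comm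

theorem conj_injective_of_center_eq_bot (hZ : Subgroup.center G = ⊥) :
    Function.Injective (conj : G →* MulAut G) :=
  (MonoidHom.ker_eq_bot_iff _).mp (ker_conj.trans hZ)

theorem mul_conj_mul_mul_inv (ψ φ : MulAut G) (g : G) :
    ψ * (conj g * φ) * ψ⁻¹ = conj (ψ g) * (ψ * φ * ψ⁻¹) := by
  rw [← mul_conj_mul_inv]
  group

theorem conj_mul_conj_mul_inv (φ : MulAut G) (x g : G) :
    conj x * (conj g * φ) * (conj x)⁻¹ = conj (x * g * (φ x)⁻¹) * φ := by
  calc conj x * (conj g * φ) * (conj x)⁻¹ = conj x * conj g * (φ * conj x⁻¹) := by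
        rw [map_inv]; group
    _ = conj (x * g * (φ x)⁻¹) * φ := by rw [mul_conj φ, map_inv, map_mul, map_mul, map_inv]; group

end MulAut

namespace TwistedConj

variable {G : Type*} [Group G] {φ : MulAut G} {g h k : G}

theorem symm (hgh : TwistedConj φ g h) : TwistedConj φ h g := by
  obtain ⟨x, rfl⟩ := hgh
  exact ⟨x⁻¹, by simp [mul_assoc]⟩

theorem trans (hgh : TwistedConj φ g h) (hhk : TwistedConj φ h k) : TwistedConj φ g k := by
  obtain ⟨x, rfl⟩ := hgh
  obtain ⟨y, rfl⟩ := hhk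
  exact ⟨y * x, by simp [mul_assoc]⟩

theorem self_apply (φ : MulAut G) (g : G) : TwistedConj φ g (φ g) :=
  ⟨g⁻¹, by simp⟩

theorem self_inv_apply (φ : MulAut G) (g : G) : TwistedConj φ g (φ⁻¹ g) := by
  simpa using (self_apply φ (φ⁻¹ g)).symm

end TwistedConj

open MulAut in
theorem exists_twistedConj_of_mem_closure {G : Type*} [Group G] {φ ψ : MulAut G}
    (hψ : ψ ∈ Subgroup.closure (Set.range (conj : G →* MulAut G) ∪ {φ})) (g : G) :
    ∃ k, TwistedConj φ g k ∧ ψ * (conj g * φ) * ψ⁻¹ = conj k * φ := by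
  induction hψ using Subgroup.closure_induction'' generalizing g with
  | mem ψ hψ =>
    obtain ⟨x, rfl⟩ | rfl := hψ
    · exact ⟨_, ⟨x, rfl⟩, conj_mul_conj_mul_inv φ x g⟩
    · exact ⟨_, .self_apply ψ g, by rw [mul_conj_mul_mul_inv, mul_inv_cancel_right]⟩
  | inv_mem ψ hψ =>
    obtain ⟨x, rfl⟩ | rfl := hψ
    · exact ⟨_, ⟨x⁻¹, rfl⟩, by rw [← map_inv, conj_mul_conj_mul_inv]⟩
    · exact ⟨_, .self_inv_apply ψ g, by
        rw [mul_conj_mul_mul_inv, inv_inv, inv_mul_cancel, one_mul]⟩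
  | one => exact ⟨g, ⟨1, by simp⟩, by simp⟩
  | mul ψ χ _ _ ihψ ihχ =>
    obtain ⟨k, hgk, hχ⟩ := ihχ g
    obtain ⟨l, hkl, hψ⟩ := ihψ k
    exact ⟨l, hgk.trans hkl, by rw [mul_inv_rev, ← hψ, ← hχ]; group⟩

/-- Let `G` have trivial center and let `H ≤ Aut(G)` be the subgroup generated by the
inner automorphisms together with `φ`. Then `g` and `h` are `φ`-twisted conjugate if
and only if `(conj g) ∘ φ` and `(conj h) ∘ φ` are conjugate by an element of `H`. -/
theorem twistedConj_iff_conj_in_aut {G : Type*} [Group G]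
    (hZ : Subgroup.center G = ⊥) (φ : MulAut G)
    (H : Subgroup (MulAut G))
    (hH : H = Subgroup.closure (Set.range (MulAut.conj : G →* MulAut G) ∪ {φ}))
    (g h : G) :
    TwistedConj φ g h ↔
      ∃ ψ ∈ H, ψ * (MulAut.conj g * φ) * ψ⁻¹ = MulAut.conj h * φ := by
  subst hH
  constructor
  · rintro ⟨x, rfl⟩
    exact ⟨MulAut.conj x, Subgroup.subset_closure (.inl ⟨x, rfl⟩),
      MulAut.conj_mul_conj_mul_inv φ x g⟩
  · rintro ⟨ψ, hψ, hgh⟩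
    obtain ⟨k, hgk, hψk⟩ := exists_twistedConj_of_mem_closure hψ g
    have hkh : k = h :=
      MulAut.conj_injective_of_center_eq_bot hZ (mul_right_cancel (hψk.symm.trans hgh))
    exact hkh ▸ hgk
end

section
/- For every n ≥ 4, the automorphism χ of the Artin group A[D_n] determined by χ(t_i) = t_i⁻¹ for all 1 ≤ i ≤ n is not inner: there is no element a ∈ A[D_n] such that χ(x) = a x a⁻¹ for all x ∈ A[D_n]. -/
/-- The pairs of (0-indexed) generator indices of the Artin group of type `D_n` that are
joined by an edge of the Coxeter graph (i.e. satisfy a braid relation `sts = tst`).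
In the 1-indexed notation of the paper these are the pairs `{i, i+1}` with `i+1 ≤ n-1`,
together with `{n-2, n}`. -/
def dnBraid (n : ℕ) (i j : Fin n) : Prop :=
  (j.val = i.val + 1 ∧ j.val ≤ n - 2) ∨ (i.val = j.val + 1 ∧ i.val ≤ n - 2) ∨
  (i.val = n - 3 ∧ j.val = n - 1) ∨ (i.val = n - 1 ∧ j.val = n - 3)

/-- The defining relations of the Artin group of type `D_n`: braid relations
`t_i t_j t_i = t_j t_i t_j` for pairs joined by an edge, and commutation relations
`t_i t_j = t_j t_i` for all other pairs. -/
def dnRels (n : ℕ) : Set (FreeGroup (Fin n)) :=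
  { r | ∃ i j : Fin n, i ≠ j ∧
      ((dnBraid n i j ∧
          r = FreeGroup.of i * FreeGroup.of j * FreeGroup.of i *
              (FreeGroup.of j * FreeGroup.of i * FreeGroup.of j)⁻¹) ∨
        (¬ dnBraid n i j ∧
          r = FreeGroup.of i * FreeGroup.of j * (FreeGroup.of j * FreeGroup.of i)⁻¹)) }

/-- The Artin group of type `D_n` (generators indexed by `Fin n`, with `i : Fin n`
corresponding to the generator `t_{i+1}` of the paper). -/
abbrev ArtinD (n : ℕ) : Type := PresentedGroup (dnRels n)

/-- For every `n ≥ 4`, the automorphism `χ` of `A[D_n]` determined by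
`χ(t_i) = t_i⁻¹` for all `i` is not inner: there is no `a ∈ A[D_n]` with
`χ(x) = a x a⁻¹` for all `x`. -/
theorem artinD_globalInversion_not_inner (n : ℕ) (hn : 4 ≤ n)
    (χ : MulAut (ArtinD n))
    (hχ : ∀ i : Fin n,
      χ (PresentedGroup.of (rels := dnRels n) i) = (PresentedGroup.of i)⁻¹) :
    ¬ ∃ a : ArtinD n, ∀ x : ArtinD n, χ x = a * x * a⁻¹ := by
  -- length homomorphism to `Multiplicative ℤ`
  have hrel : ∀ r ∈ dnRels n,
      FreeGroup.lift (fun _ : Fin n => Multiplicative.ofAdd (1 : ℤ)) r = 1 := by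
    rintro r ⟨i, j, -, ⟨-, rfl⟩ | ⟨-, rfl⟩⟩ <;>
      simp [← ofAdd_add, ← ofAdd_neg]
  set φ : ArtinD n →* Multiplicative ℤ := PresentedGroup.toGroup hrel with hφ
  rintro ⟨a, ha⟩
  have i0 : Fin n := ⟨0, by omega⟩
  have h1 : φ (χ (PresentedGroup.of i0)) = Multiplicative.ofAdd (-1 : ℤ) := by
    rw [hχ i0, map_inv, hφ, PresentedGroup.toGroup.of, ← ofAdd_neg]
  have h2 : φ (χ (PresentedGroup.of i0)) = Multiplicative.ofAdd (1 : ℤ) := by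
    rw [ha (PresentedGroup.of i0), map_mul, map_mul, map_inv, mul_comm,
      ← mul_assoc, inv_mul_cancel, one_mul, hφ, PresentedGroup.toGroup.of]
  rw [h1] at h2
  exact absurd (Multiplicative.ofAdd.injective h2) (by norm_num)
end
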